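/- arXiv:1407.4228 — 4 statements merged into one kernel-verified Lean document; each statement's English description precedes it below -/
import Mathlib

section
/- Let y, w ∈ 𝔖_{Δ,r} with y ≤ w in the Bruhat order. Then for every i ∈ ℤ the nondecreasing rearrangement of the family (y(s))_{s≤i} is entrywise less than or equal to the nondecreasing rearrangement of (w(s))_{s≤i}; equivalently, for all i, t ∈ ℤ, #{s ≤ i | y(s) > t} ≤ #{s ≤ i | w(s) > t}. Likewise, for every i ∈ ℤ the nondecreasing rearrangement of (y(s))_{s≥i} is entrywise greater than or equal to that of (w(s))_{s≥i}; equivalently, for all i, t ∈ ℤ, #{s ≥ i | y(s) < t} ≤ #{s ≥ i | w(s) < t}. -/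
/-!
Along a Bruhat chain, each step `x ↦ t x` with `t = (i, j)`, `i < j`, and `ℓ(t x) > ℓ(x)`
satisfies `x⁻¹ i < x⁻¹ j`. Hence `t x = x ∘ σ` for the involution `σ = x⁻¹ t x`, which only
exchanges positions `u < σ u` carrying increasing values `x u < x (σ u)`; moving larger values
to smaller positions can only increase `#{s ≤ a | c < x s}` and `#{s ≥ a | x s < c}`.

The inequality `x⁻¹ i < x⁻¹ j` comes from identifying `ℓ` on `W_r` with the number of
inversions counted modulo the translation by `r`: right multiplication by `(i, j)` strictly
decreases that number when `x i > x j`, by induction on `j - i`.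
-/

open scoped Classical

noncomputable section

/-- The extended affine symmetric group `𝔖_{Δ,r}`: permutations `w` of `ℤ`
with `w (i + r) = w i + r` for all `i`. -/
def AffSym (r : ℕ) : Subgroup (Equiv.Perm ℤ) where
  carrier := {w | ∀ i : ℤ, w (i + r) = w i + r}
  one_mem' := fun _ => rfl
  mul_mem' := by
    intro a b ha hb i
    simp only [Equiv.Perm.mul_apply, hb i, ha (b i)]
  inv_mem' := by
    intro a ha i
    apply a.injective
    rw [ha (a⁻¹ i)]
    simp

/-- The underlying function of the affine transposition `(i,j)`. -/
def tFun (r : ℕ) (i j : ℤ) : ℤ → ℤ := fun k =>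
  if (r : ℤ) ∣ (k - i) then j + (k - i)
  else if (r : ℤ) ∣ (k - j) then i + (k - j)
  else k

theorem tFun_invol (r : ℕ) (i j : ℤ) (h : ¬ (r : ℤ) ∣ (j - i)) :
    Function.Involutive (tFun r i j) := by
  intro k
  by_cases h1 : (r : ℤ) ∣ (k - i)
  · have e1 : tFun r i j k = j + (k - i) := by simp only [tFun]; rw [if_pos h1]
    have h2 : ¬ (r : ℤ) ∣ (j + (k - i) - i) := by
      intro hd
      apply h
      have h5 := hd.sub h1
      have h6 : j + (k - i) - i - (k - i) = j - i := by ring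
      rwa [h6] at h5
    have h3 : (r : ℤ) ∣ (j + (k - i) - j) := by simpa using h1
    rw [e1]; simp only [tFun]; rw [if_neg h2, if_pos h3]; ring
  · by_cases h2 : (r : ℤ) ∣ (k - j)
    · have e1 : tFun r i j k = i + (k - j) := by
        simp only [tFun]; rw [if_neg h1, if_pos h2]
      have h3 : (r : ℤ) ∣ (i + (k - j) - i) := by simpa using h2
      rw [e1]; simp only [tFun]; rw [if_pos h3]; ring
    · have e1 : tFun r i j k = k := by simp only [tFun]; rw [if_neg h1, if_neg h2]
      rw [e1, e1]

/-- The affine transposition `(i,j) ∈ W_r` (defined to be `1` in the degenerate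
case `i ≡ j (mod r)`). -/
def tPerm (r : ℕ) (i j : ℤ) : Equiv.Perm ℤ :=
  if h : (r : ℤ) ∣ (j - i) then 1 else Function.Involutive.toPerm _ (tFun_invol r i j h)

/-- The set of Coxeter generators `s_1, …, s_r` of `W_r`. -/
def sGen (r : ℕ) : Set (Equiv.Perm ℤ) :=
  {w | ∃ i : ℤ, 1 ≤ i ∧ i ≤ (r : ℤ) ∧ w = tPerm r i (i + 1)}

/-- The affine Weyl group `W_r`, generated by `s_1, …, s_r`. -/
def WGrp (r : ℕ) : Subgroup (Equiv.Perm ℤ) := Subgroup.closure (sGen r)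

/-- Length of an element of `W_r`: the minimal length of an expression
as a product of the generators `s_1, …, s_r`. -/
def lenW (r : ℕ) (x : Equiv.Perm ℤ) : ℕ :=
  sInf {m | ∃ l : List (Equiv.Perm ℤ), l.length = m ∧ (∀ s ∈ l, s ∈ sGen r) ∧ l.prod = x}

/-- The shift permutation `ρ : j ↦ j + 1`. -/
def rhoP : Equiv.Perm ℤ := Equiv.addRight 1

/-- For `w = ρ^a x` with `x ∈ W_r`, recovers the exponent `a`. -/
def shiftIdx (r : ℕ) (w : Equiv.Perm ℤ) : ℤ :=
  (∑ i ∈ Finset.Icc (1 : ℤ) (r : ℤ), (w i - i)) / r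

/-- Length on `𝔖_{Δ,r}`: writing `w = ρ^a x` with `x ∈ W_r`, `ℓ(w) = ℓ(x)`. -/
def alen (r : ℕ) (w : Equiv.Perm ℤ) : ℕ :=
  lenW r ((rhoP ^ shiftIdx r w)⁻¹ * w)

/-- The set `T` of affine reflections `(i,j)`, `i < j`, `i ≢ j (mod r)`. -/
def TSet (r : ℕ) : Set (Equiv.Perm ℤ) :=
  {t | ∃ i j : ℤ, i < j ∧ ¬ (r : ℤ) ∣ (j - i) ∧ t = tPerm r i j}

/-- Bruhat order on `W_r`: `y ≤ w` iff `w = t_1 ⋯ t_m y` with all `t_i ∈ T` and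
`ℓ(t_i ⋯ t_m y) > ℓ(t_{i+1} ⋯ t_m y)` for all `i`. -/
def bruhatLE (r : ℕ) (y w : Equiv.Perm ℤ) : Prop :=
  ∃ l : List (Equiv.Perm ℤ), (∀ t ∈ l, t ∈ TSet r) ∧ w = l.prod * y ∧
    ∀ k, k < l.length →
      lenW r ((l.drop (k + 1)).prod * y) < lenW r ((l.drop k).prod * y)

/-- Bruhat order extended to `𝔖_{Δ,r}`: `ρ^a y ≤ ρ^b w` iff `a = b` and `y ≤ w`. -/
def abruhatLE (r : ℕ) (y w : Equiv.Perm ℤ) : Prop :=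
  shiftIdx r y = shiftIdx r w ∧
    bruhatLE r ((rhoP ^ shiftIdx r y)⁻¹ * y) ((rhoP ^ shiftIdx r w)⁻¹ * w)

/-- `Λ_Δ(n,r)`: `n`-periodic sequences of naturals summing to `r` over a period. -/
def LambdaSet (n r : ℕ) : Set (ℤ → ℕ) :=
  {lam | (∀ i : ℤ, lam i = lam (i - n)) ∧ ∑ i ∈ Finset.Icc (1 : ℤ) (n : ℤ), lam i = r}

/-- The interval `R^λ_m ⊆ ℤ`; for `m = i + kn` with `1 ≤ i ≤ n` this is
`{λ_{k,i-1}+1, …, λ_{k,i-1}+λ_i}` where `λ_{k,i-1} = kr + λ_1 + ⋯ + λ_{i-1}`. -/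
def Rset (n r : ℕ) (lam : ℤ → ℕ) (m : ℤ) : Set ℤ :=
  {a | ((m - 1) / n) * r + ∑ t ∈ Finset.Icc (1 : ℤ) ((m - 1) % n), (lam t : ℤ) < a ∧
       a ≤ ((m - 1) / n) * r + ∑ t ∈ Finset.Icc (1 : ℤ) ((m - 1) % n + 1), (lam t : ℤ)}

/-- The finite symmetric group `𝔖_r ⊆ W_r`, generated by `s_1, …, s_{r-1}`. -/
def SymFin (r : ℕ) : Subgroup (Equiv.Perm ℤ) :=
  Subgroup.closure {w | ∃ i : ℤ, 1 ≤ i ∧ i < (r : ℤ) ∧ w = tPerm r i (i + 1)}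

/-- The Young subgroup `𝔖_λ`: elements of `𝔖_r` stabilizing each `R^λ_i`, `1 ≤ i ≤ n`. -/
def YoungSet (n r : ℕ) (lam : ℤ → ℕ) : Set (Equiv.Perm ℤ) :=
  {w | w ∈ SymFin r ∧ ∀ i : ℤ, 1 ≤ i → i ≤ (n : ℤ) → w '' Rset n r lam i = Rset n r lam i}

/-- `D^Δ_λ`: distinguished right coset representatives. -/
def DRep (n r : ℕ) (lam : ℤ → ℕ) : Set (Equiv.Perm ℤ) :=
  {d | d ∈ AffSym r ∧ ∀ w ∈ YoungSet n r lam, alen r (w * d) = alen r w + alen r d}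

/-- `D^Δ_{λ,μ} = D^Δ_λ ∩ (D^Δ_μ)⁻¹`. -/
def DRep2 (n r : ℕ) (lam mu : ℤ → ℕ) : Set (Equiv.Perm ℤ) :=
  {d | d ∈ DRep n r lam ∧ d⁻¹ ∈ DRep n r mu}

/-- The matrix `J_Δ(λ,d,μ) = (|R^λ_k ∩ d(R^μ_l)|)_{k,l}`. -/
def JMat (n r : ℕ) (lam mu : ℤ → ℕ) (d : Equiv.Perm ℤ) : ℤ → ℤ → ℕ :=
  fun k l => (Rset n r lam k ∩ (d '' Rset n r mu l)).ncard

/-- `Θ_Δ(n)`: ℕ-matrices, `n`-periodic along the diagonal, with finite rows and columns. -/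
def ThetaSet (n : ℕ) : Set (ℤ → ℤ → ℕ) :=
  {A | (∀ i j : ℤ, A (i + n) (j + n) = A i j) ∧
       (∀ i : ℤ, {j : ℤ | A i j ≠ 0}.Finite) ∧
       (∀ j : ℤ, {i : ℤ | A i j ≠ 0}.Finite)}

/-- `σ(A) = Σ_{1 ≤ i ≤ n, j ∈ ℤ} a_{i,j}`. -/
def sigmaTot (n : ℕ) (A : ℤ → ℤ → ℕ) : ℕ :=
  ∑ᶠ j : ℤ, ∑ i ∈ Finset.Icc (1 : ℤ) (n : ℤ), A i j

/-- Row sums. -/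
def roM (A : ℤ → ℤ → ℕ) : ℤ → ℕ := fun i => ∑ᶠ j : ℤ, A i j

/-- Column sums. -/
def coM (A : ℤ → ℤ → ℕ) : ℤ → ℕ := fun j => ∑ᶠ i : ℤ, A i j

/-- `σ_{i,j}(A)`: for `i < j` the sum `Σ_{s ≤ i, t ≥ j} a_{s,t}`; for `i > j` the
sum `Σ_{s ≥ i, t ≤ j} a_{s,t}`. -/
def sigmaOrd (A : ℤ → ℤ → ℕ) (i j : ℤ) : ℕ :=
  if i < j then ∑ᶠ (p : ℤ × ℤ) (_ : p.1 ≤ i ∧ j ≤ p.2), A p.1 p.2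
  else ∑ᶠ (p : ℤ × ℤ) (_ : i ≤ p.1 ∧ p.2 ≤ j), A p.1 p.2

/-- The map `η_m : A ↦ (a_{i, mn+j})_{i,j}`. -/
def etaM (n : ℕ) (m : ℤ) (A : ℤ → ℤ → ℕ) : ℤ → ℤ → ℕ := fun i j => A i (m * n + j)

/-- The double coset `𝔖_λ d 𝔖_μ`. -/
def DCoset (n r : ℕ) (lam mu : ℤ → ℕ) (d : Equiv.Perm ℤ) : Set (Equiv.Perm ℤ) :=
  {w | ∃ u ∈ YoungSet n r lam, ∃ v ∈ YoungSet n r mu, w = u * d * v}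

/-- `d_A = Σ a_{i,j} a_{k,l}` over `1 ≤ i ≤ n`, `k ≤ i`, `j < l`. -/
def dWt (n : ℕ) (A : ℤ → ℤ → ℕ) : ℕ :=
  ∑ᶠ (q : (ℤ × ℤ) × ℤ × ℤ)
    (_ : 1 ≤ q.1.1 ∧ q.1.1 ≤ (n : ℤ) ∧ q.2.1 ≤ q.1.1 ∧ q.1.2 < q.2.2),
    A q.1.1 q.1.2 * A q.2.1 q.2.2

/-- The embedding `A ↦ Ã` from `Θ_Δ(n)` to `Θ_Δ(N)`. -/
def tildeM (n N : ℕ) (A : ℤ → ℤ → ℕ) : ℤ → ℤ → ℕ := fun k l =>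
  let k0 : ℤ := (k - 1) % N + 1
  let l' : ℤ := l - ((k - 1) / N) * N
  let l0 : ℤ := (l' - 1) % N + 1
  let m : ℤ := (l' - 1) / N
  if k0 ≤ n ∧ l0 ≤ n then A k0 (l0 + m * n) else 0

/-- `Θ̃_Δ(n)`: ℤ-matrices with nonnegative off-diagonal entries, `n`-periodic
along the diagonal, with finite rows and columns. -/
def ThetaTSet (n : ℕ) : Set (ℤ → ℤ → ℤ) :=
  {A | (∀ i j : ℤ, i ≠ j → 0 ≤ A i j) ∧ (∀ i j : ℤ, A (i + n) (j + n) = A i j) ∧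
       (∀ i : ℤ, {j : ℤ | A i j ≠ 0}.Finite) ∧ (∀ j : ℤ, {i : ℤ | A i j ≠ 0}.Finite)}

/-- Row sums (ℤ-entry version). -/
def roMZ (A : ℤ → ℤ → ℤ) : ℤ → ℤ := fun i => ∑ᶠ j : ℤ, A i j

/-- Column sums (ℤ-entry version). -/
def coMZ (A : ℤ → ℤ → ℤ) : ℤ → ℤ := fun j => ∑ᶠ i : ℤ, A i j

/-- `σ_{i,j}` (ℤ-entry version). -/
def sigmaOrdZ (A : ℤ → ℤ → ℤ) (i j : ℤ) : ℤ :=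
  if i < j then ∑ᶠ (p : ℤ × ℤ) (_ : p.1 ≤ i ∧ j ≤ p.2), A p.1 p.2
  else ∑ᶠ (p : ℤ × ℤ) (_ : i ≤ p.1 ∧ p.2 ≤ j), A p.1 p.2

/-- The relation `B ⊑ A` on `Θ̃_Δ(n)`. -/
def sqLE (B A : ℤ → ℤ → ℤ) : Prop :=
  (∀ i j : ℤ, i ≠ j → sigmaOrdZ B i j ≤ sigmaOrdZ A i j) ∧ roMZ B = roMZ A ∧ coMZ B = coMZ A

/-- The vector `v_a ∈ V = 𝔽[ε,ε⁻¹]^r`: for `a = i + kr` with `1 ≤ i ≤ r`,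
`v_a = ε^{-k} v_i` where `v_1, …, v_r` is the standard basis. -/
def vb (F : Type*) [Field F] (r : ℕ) (a : ℤ) : Fin r → LaurentPolynomial F :=
  if h : 0 < r then
    Pi.single ⟨((a - 1) % (r : ℤ)).toNat, by
      have h1 : (0 : ℤ) < (r : ℤ) := by exact_mod_cast h
      have h2 : 0 ≤ (a - 1) % (r : ℤ) := Int.emod_nonneg _ (by omega)
      have h3 : (a - 1) % (r : ℤ) < (r : ℤ) := Int.emod_lt_of_pos _ h1
      omega⟩
      (LaurentPolynomial.T (-((a - 1) / (r : ℤ))))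
  else 0

/-- The bound `Σ_{1 ≤ j ≤ i} λ_j + kr` for `m = i + kn`, `1 ≤ i ≤ n`. -/
def bnd (n r : ℕ) (lam : ℤ → ℕ) (m : ℤ) : ℤ :=
  ((m - 1) / n) * r + ∑ t ∈ Finset.Icc (1 : ℤ) ((m - 1) % n + 1), (lam t : ℤ)

/-- The lattice-filtration subspace `L_m = span_𝔽{v_a | a ≤ Σ_{1≤j≤i} λ_j + kr}`. -/
def Lsub (F : Type*) [Field F] (n r : ℕ) (lam : ℤ → ℕ) (m : ℤ) :
    Submodule F (Fin r → LaurentPolynomial F) :=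
  Submodule.span F {x | ∃ a : ℤ, a ≤ bnd n r lam m ∧ x = vb F r a}

/-- The subspace `L'_m = span_𝔽{v_{d(a)} | a ≤ Σ_{1≤j≤i} μ_j + kr}`. -/
def Lsub' (F : Type*) [Field F] (n r : ℕ) (mu : ℤ → ℕ) (d : Equiv.Perm ℤ) (m : ℤ) :
    Submodule F (Fin r → LaurentPolynomial F) :=
  Submodule.span F {x | ∃ a : ℤ, a ≤ bnd n r mu m ∧ x = vb F r (d a)}
end

namespace Function.Periodic

variable {M : Type*} {f : ℤ → M} {r : ℕ}

theorem apply_eq_of_dvd_sub (h : Periodic f r) {a b : ℤ} (hab : (r : ℤ) ∣ b - a) :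
    f b = f a := by
  obtain ⟨k, hk⟩ := hab
  rw [show b = a + k * r by linarith]
  exact h.int_mul k a

theorem sum_range_add [AddCancelCommMonoid M] (h : Periodic f r) (a : ℤ) :
    ∑ k ∈ Finset.range r, f (a + k) = ∑ k ∈ Finset.range r, f k := by
  have step : ∀ a : ℤ, ∑ k ∈ Finset.range r, f (a + 1 + k) = ∑ k ∈ Finset.range r, f (a + k) := by
    intro a
    have := (Finset.sum_range_succ' (fun k : ℕ => f (a + k)) r).symm.trans
      (Finset.sum_range_succ (fun k : ℕ => f (a + k)) r)
    simp only [Nat.cast_add, Nat.cast_one, Nat.cast_zero, add_zero, h a] at this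
    simpa [add_assoc, add_comm (1 : ℤ)] using add_right_cancel this
  induction a using Int.induction_on with
  | zero => simp
  | succ n ih => rw [step, ih]
  | pred n ih => rw [← ih, ← step, sub_add_cancel]

theorem sum_range_eq_add_add [AddCancelCommMonoid M] (h : Periodic f r) (hr : 2 ≤ r)
    (m : ℤ) : ∑ k ∈ Finset.range r, f k = f m + f (m + 1) + ∑ k ∈ Finset.Ico 2 r, f (m + k) := by
  rw [← h.sum_range_add m, Finset.range_eq_Ico, Finset.sum_eq_sum_Ico_succ_bot (by omega),
    Finset.sum_eq_sum_Ico_succ_bot (by omega)]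
  simp [add_assoc]

end Function.Periodic

namespace AffSym

variable {r : ℕ} {w : Equiv.Perm ℤ}

theorem periodic_sub (hw : w ∈ AffSym r) : Function.Periodic (fun s => w s - s) r :=
  fun s => by simp only [hw s]; ring

theorem apply_sub_apply_of_dvd (hw : w ∈ AffSym r) {a b : ℤ} (h : (r : ℤ) ∣ b - a) :
    w b - w a = b - a := by
  linarith [(periodic_sub hw).apply_eq_of_dvd_sub h]

theorem dvd_apply_sub_apply_iff (hw : w ∈ AffSym r) {a b : ℤ} :
    (r : ℤ) ∣ w b - w a ↔ (r : ℤ) ∣ b - a := by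
  refine ⟨fun h => ?_, fun h => by rwa [apply_sub_apply_of_dvd hw h]⟩
  have := apply_sub_apply_of_dvd (inv_mem hw) h
  simp only [Equiv.Perm.coe_inv, Equiv.symm_apply_apply] at this
  rwa [this]

theorem exists_abs_sub_le (hr : 0 < r) (hw : w ∈ AffSym r) : ∃ M, ∀ s, |w s - s| ≤ M := by
  obtain ⟨M, hM⟩ := ((Set.finite_Ico 0 (r : ℤ)).image fun s => |w s - s|).bddAbove
  refine ⟨M, fun s => ?_⟩
  obtain ⟨y, hy, hsy⟩ := (periodic_sub hw).exists_mem_Ico₀ (by exact_mod_cast hr) s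
  exact hsy ▸ hM ⟨y, hy, rfl⟩

theorem finite_setOf_le_lt (hr : 0 < r) (hw : w ∈ AffSym r) (i t : ℤ) :
    {s | s ≤ i ∧ t < w s}.Finite := by
  obtain ⟨M, hM⟩ := exists_abs_sub_le hr hw
  refine (Set.finite_Icc (t - M) i).subset fun s ⟨hsi, hts⟩ => ⟨?_, hsi⟩
  linarith [(abs_le.mp (hM s)).2]

theorem finite_setOf_ge_lt (hr : 0 < r) (hw : w ∈ AffSym r) (i t : ℤ) :
    {s | i ≤ s ∧ w s < t}.Finite := by
  obtain ⟨M, hM⟩ := exists_abs_sub_le hr hw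
  refine (Set.finite_Icc i (t + M)).subset fun s ⟨his, hst⟩ => ⟨his, ?_⟩
  linarith [(abs_le.mp (hM s)).1]

end AffSym

section Reflection

variable {r : ℕ} {i j k : ℤ}

theorem tPerm_apply_of_dvd_left (hij : ¬ (r : ℤ) ∣ j - i) (hk : (r : ℤ) ∣ k - i) :
    tPerm r i j k = k + (j - i) := by
  rw [tPerm, dif_neg hij]
  change tFun r i j k = _
  rw [tFun, if_pos hk]
  ring

theorem tPerm_apply_of_dvd_right (hij : ¬ (r : ℤ) ∣ j - i) (hk : (r : ℤ) ∣ k - j) :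
    tPerm r i j k = k - (j - i) := by
  have hki : ¬ (r : ℤ) ∣ k - i := fun h => hij (by simpa using h.sub hk)
  rw [tPerm, dif_neg hij]
  change tFun r i j k = _
  rw [tFun, if_neg hki, if_pos hk]
  ring

theorem tPerm_apply_of_not_dvd (hij : ¬ (r : ℤ) ∣ j - i) (hki : ¬ (r : ℤ) ∣ k - i)
    (hkj : ¬ (r : ℤ) ∣ k - j) : tPerm r i j k = k := by
  rw [tPerm, dif_neg hij]
  change tFun r i j k = _
  rw [tFun, if_neg hki, if_neg hkj]

theorem tPerm_of_dvd (hij : (r : ℤ) ∣ j - i) : tPerm r i j = 1 := by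
  rw [tPerm, dif_pos hij]

theorem tPerm_mul_self (i j : ℤ) : tPerm r i j * tPerm r i j = 1 := by
  by_cases hij : (r : ℤ) ∣ j - i
  · rw [tPerm_of_dvd hij, one_mul]
  · rw [tPerm, dif_neg hij]
    ext k
    exact tFun_invol r i j hij k

theorem tPerm_inv (i j : ℤ) : (tPerm r i j)⁻¹ = tPerm r i j :=
  inv_eq_of_mul_eq_one_right (tPerm_mul_self i j)

theorem tPerm_tPerm (i j k : ℤ) : tPerm r i j (tPerm r i j k) = k :=
  congrArg (· k) (tPerm_mul_self (r := r) i j)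

theorem tPerm_mem_AffSym (i j : ℤ) : tPerm r i j ∈ AffSym r := by
  by_cases hij : (r : ℤ) ∣ j - i
  · rw [tPerm_of_dvd hij]
    exact one_mem _
  intro k
  have shift : ∀ a : ℤ, (r : ℤ) ∣ k + r - a ↔ (r : ℤ) ∣ k - a := fun a => by
    rw [show k + r - a = k - a + r by ring, dvd_add_self_right]
  by_cases hki : (r : ℤ) ∣ k - i
  · rw [tPerm_apply_of_dvd_left hij hki, tPerm_apply_of_dvd_left hij ((shift i).2 hki)]
    ring
  by_cases hkj : (r : ℤ) ∣ k - j
  · rw [tPerm_apply_of_dvd_right hij hkj, tPerm_apply_of_dvd_right hij ((shift j).2 hkj)]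
    ring
  rw [tPerm_apply_of_not_dvd hij hki hkj,
    tPerm_apply_of_not_dvd hij (mt (shift i).1 hki) (mt (shift j).1 hkj)]

theorem AffSym.mul_tPerm_mul_inv {u : Equiv.Perm ℤ} (hu : u ∈ AffSym r) (i j : ℤ) :
    u * tPerm r i j * u⁻¹ = tPerm r (u i) (u j) := by
  by_cases hij : (r : ℤ) ∣ j - i
  · rw [tPerm_of_dvd hij, tPerm_of_dvd ((AffSym.dvd_apply_sub_apply_iff hu).2 hij)]
    group
  have hij' : ¬ (r : ℤ) ∣ u j - u i := mt (AffSym.dvd_apply_sub_apply_iff hu).1 hij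
  rw [mul_inv_eq_iff_eq_mul]
  ext k
  simp only [Equiv.Perm.mul_apply]
  by_cases hki : (r : ℤ) ∣ k - i
  · have hkj : (r : ℤ) ∣ k + (j - i) - j := by rwa [show k + (j - i) - j = k - i by ring]
    rw [tPerm_apply_of_dvd_left hij hki,
      tPerm_apply_of_dvd_left hij' ((AffSym.dvd_apply_sub_apply_iff hu).2 hki)]
    linarith [AffSym.apply_sub_apply_of_dvd hu hki, AffSym.apply_sub_apply_of_dvd hu hkj]
  by_cases hkj : (r : ℤ) ∣ k - j
  · have hki' : (r : ℤ) ∣ k - (j - i) - i := by rwa [show k - (j - i) - i = k - j by ring]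
    rw [tPerm_apply_of_dvd_right hij hkj,
      tPerm_apply_of_dvd_right hij' ((AffSym.dvd_apply_sub_apply_iff hu).2 hkj)]
    linarith [AffSym.apply_sub_apply_of_dvd hu hkj, AffSym.apply_sub_apply_of_dvd hu hki']
  rw [tPerm_apply_of_not_dvd hij hki hkj, tPerm_apply_of_not_dvd hij'
    (mt (AffSym.dvd_apply_sub_apply_iff hu).1 hki) (mt (AffSym.dvd_apply_sub_apply_iff hu).1 hkj)]

theorem tPerm_add_mul (i j c : ℤ) : tPerm r (i + c * r) (j + c * r) = tPerm r i j := by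
  have hu : Equiv.addRight (c * r) ∈ AffSym r := fun k => by simp only [Equiv.coe_addRight]; ring
  have := AffSym.mul_tPerm_mul_inv hu i j
  simp only [Equiv.coe_addRight] at this
  rw [← this, mul_inv_eq_iff_eq_mul]
  ext k
  have := (AffSym.periodic_sub (tPerm_mem_AffSym (r := r) i j)).int_mul c k
  simp only [Equiv.Perm.mul_apply, Equiv.coe_addRight, Int.cast_id] at this ⊢
  linarith

end Reflection

/-- The simple reflection `s_m`, for every `m ∈ ℤ`; `s_{m + r} = s_m`. -/
abbrev simpleRefl (r : ℕ) (m : ℤ) : Equiv.Perm ℤ := tPerm r m (m + 1)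

section SimpleReflection

variable {r : ℕ} {m k : ℤ}

theorem not_dvd_add_one_sub (hr : 2 ≤ r) (m : ℤ) : ¬ (r : ℤ) ∣ m + 1 - m := by
  rw [add_sub_cancel_left]
  exact fun h => absurd (Int.le_of_dvd one_pos h) (by omega)

theorem simpleRefl_apply_of_dvd (hr : 2 ≤ r) (hk : (r : ℤ) ∣ k - m) :
    simpleRefl r m k = k + 1 := by
  rw [tPerm_apply_of_dvd_left (not_dvd_add_one_sub hr m) hk]
  ring

theorem simpleRefl_apply_self (hr : 2 ≤ r) (m : ℤ) : simpleRefl r m m = m + 1 :=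
  simpleRefl_apply_of_dvd hr (by simp)

theorem simpleRefl_apply_add_one (hr : 2 ≤ r) (m : ℤ) : simpleRefl r m (m + 1) = m := by
  rw [tPerm_apply_of_dvd_right (not_dvd_add_one_sub hr m) (by simp)]
  ring

theorem simpleRefl_apply_add (k : ℕ) (h2 : 2 ≤ k) (hk : k < r) :
    simpleRefl r m (m + k) = m + k := by
  have hnd : ∀ n : ℤ, 0 < n → n < r → ¬ (r : ℤ) ∣ n := fun n h0 hn h =>
    absurd (Int.le_of_dvd h0 h) (by omega)
  exact tPerm_apply_of_not_dvd (hnd _ (by omega) (by omega))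
    (by simpa using hnd k (by omega) (by omega))
    (by rw [show m + k - (m + 1) = k - 1 by ring]; exact hnd _ (by omega) (by omega))

theorem abs_simpleRefl_apply_sub_le (m k : ℤ) : |simpleRefl r m k - k| ≤ 1 := by
  by_cases hm : (r : ℤ) ∣ m + 1 - m
  · simp [tPerm_of_dvd hm]
  by_cases hkm : (r : ℤ) ∣ k - m
  · simp [tPerm_apply_of_dvd_left hm hkm]
  by_cases hkm' : (r : ℤ) ∣ k - (m + 1)
  · simp [tPerm_apply_of_dvd_right hm hkm']
  simp [tPerm_apply_of_not_dvd hm hkm hkm']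

theorem simpleRefl_mem_sGen (hr : 0 < r) (m : ℤ) : simpleRefl r m ∈ sGen r := by
  have hr' : (0 : ℤ) < r := by exact_mod_cast hr
  refine ⟨(m - 1) % r + 1, by linarith [Int.emod_nonneg (m - 1) hr'.ne'],
    by linarith [Int.emod_lt_of_pos (m - 1) hr'], ?_⟩
  have hm : (m - 1) % r + 1 + (m - 1) / r * r = m := by
    linarith [Int.emod_add_mul_ediv (m - 1) r]
  rw [← tPerm_add_mul _ _ ((m - 1) / r), hm, add_right_comm, hm]

end SimpleReflection

section AffineWeylGroup

variable {r : ℕ} {z g : Equiv.Perm ℤ}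

theorem sGen_subset_AffSym : sGen r ⊆ AffSym r := by
  rintro _ ⟨m, -, -, rfl⟩
  exact tPerm_mem_AffSym _ _

theorem WGrp_le_AffSym : WGrp r ≤ AffSym r :=
  (Subgroup.closure_le _).2 sGen_subset_AffSym

theorem inv_eq_self_of_mem_sGen (hg : g ∈ sGen r) : g⁻¹ = g := by
  obtain ⟨m, -, -, rfl⟩ := hg
  exact tPerm_inv _ _

/-- Vanishes on `W_r` but equals `r a` on `ρ^a`: this is what rules out the translations among
the elements of `W_r` without descents. -/
noncomputable def shiftSum (r : ℕ) (z : Equiv.Perm ℤ) : ℤ :=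
  ∑ k ∈ Finset.range r, (z k - k)

theorem shiftSum_mul_of_mem_sGen (hz : z ∈ AffSym r) (hg : g ∈ sGen r) :
    shiftSum r (z * g) = shiftSum r z := by
  obtain ⟨m, hm, hmr, rfl⟩ := hg
  rcases Nat.lt_or_ge r 2 with hr | hr
  · rw [tPerm_of_dvd (by rw [show r = 1 by omega]; simp), mul_one]
  unfold shiftSum
  rw [(AffSym.periodic_sub (mul_mem hz (tPerm_mem_AffSym _ _))).sum_range_eq_add_add hr m,
    (AffSym.periodic_sub hz).sum_range_eq_add_add hr m]
  have hrest : ∑ k ∈ Finset.Ico 2 r, ((z * simpleRefl r m) (m + k) - (m + k))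
      = ∑ k ∈ Finset.Ico 2 r, (z (m + k) - (m + k)) :=
    Finset.sum_congr rfl fun k hk => by
      obtain ⟨hk2, hkr⟩ := Finset.mem_Ico.mp hk
      rw [Equiv.Perm.mul_apply, simpleRefl_apply_add k hk2 hkr]
  rw [hrest, Equiv.Perm.mul_apply, Equiv.Perm.mul_apply, simpleRefl_apply_self hr,
    simpleRefl_apply_add_one hr]
  ring

theorem shiftSum_eq_zero (hz : z ∈ WGrp r) : shiftSum r z = 0 := by
  induction hz using Subgroup.closure_induction_right with
  | one => simp [shiftSum]
  | mul_right x hx g hg ih => rwa [shiftSum_mul_of_mem_sGen (WGrp_le_AffSym hx) hg]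
  | mul_inv_cancel x hx g hg ih =>
    rwa [inv_eq_self_of_mem_sGen hg, shiftSum_mul_of_mem_sGen (WGrp_le_AffSym hx) hg]

theorem eq_one_of_strictMono (hr : 0 < r) (hz : z ∈ WGrp r) (hmono : StrictMono z) :
    z = 1 := by
  have hsucc : ∀ k, z (k + 1) = z k + 1 := by
    intro k
    obtain ⟨c, hc⟩ := z.surjective (z k + 1)
    have hkc : k < c := hmono.lt_iff_lt.1 (by omega)
    have hck : ¬ k + 1 < c := fun h => by
      have := hmono h
      have := hmono (lt_add_one k)
      omega
    rw [show k + 1 = c by omega, hc]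
  have hlin : ∀ k, z k = k + z 0 := by
    intro k
    induction k using Int.induction_on with
    | zero => simp
    | succ n ih => rw [hsucc, ih]; ring
    | pred n ih =>
      have := hsucc (-n - 1)
      rw [sub_add_cancel] at this
      linarith
  have hsum : shiftSum r z = r * z 0 := by
    rw [shiftSum, Finset.sum_congr rfl fun (k : ℕ) _ => show z k - k = z 0 by linarith [hlin k]]
    simp
  have hz0 : z 0 = 0 := by
    have := shiftSum_eq_zero hz
    rw [hsum] at this
    exact (mul_eq_zero.mp this).resolve_left (by exact_mod_cast hr.ne')
  ext k
  simp [hlin k, hz0]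

end AffineWeylGroup

theorem Int.lt_apply_iff_apply_lt {s : ℤ → ℤ} (hs : Function.Involutive s)
    (hd : ∀ k, |s k - k| ≤ 1) {a c : ℤ} (hca : c ≠ a) : a < s c ↔ s a < c := by
  have h1 : s c = a → s a = c := fun h => h ▸ hs c
  have h2 : s a = c → s c = a := fun h => h ▸ hs a
  have := abs_le.mp (hd a)
  have := abs_le.mp (hd c)
  omega

theorem Set.ncard_add_ite_eq_of_sdiff_singleton_eq {α : Type*} {A B : Set α} {a : α}
    (hA : A.Finite) (hB : B.Finite) (h : A \ {a} = B \ {a}) :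
    A.ncard + (if a ∈ B then 1 else 0) = B.ncard + (if a ∈ A then 1 else 0) := by
  have key : ∀ S : Set α, S.Finite → S.ncard = (S \ {a}).ncard + if a ∈ S then 1 else 0 := by
    intro S hS
    split_ifs with ha
    · exact (Set.ncard_sdiff_singleton_add_one ha hS).symm
    · rw [Set.sdiff_singleton_eq_self ha, add_zero]
  rw [key A hA, key B hB, h]
  ring

def invSet (z : ℤ → ℤ) (α : ℤ) : Set ℤ := {b | α < b ∧ z b < z α}

/-- The number of inversions `(α, b)` of `z` modulo the diagonal translation by `r`. -/
noncomputable def invCount (r : ℕ) (z : Equiv.Perm ℤ) : ℕ :=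
  ∑ k ∈ Finset.range r, (invSet z k).ncard

section Inversions

variable {r : ℕ} {z : Equiv.Perm ℤ}

theorem invSet_finite (hr : 0 < r) (hz : z ∈ AffSym r) (α : ℤ) : (invSet z α).Finite :=
  (AffSym.finite_setOf_ge_lt hr hz α (z α)).subset fun _ hb => ⟨hb.1.le, hb.2⟩

theorem periodic_ncard_invSet (hz : z ∈ AffSym r) :
    Function.Periodic (fun α => (invSet z α).ncard) r := by
  intro α
  have : invSet z (α + r) = (· + (r : ℤ)) '' invSet z α := by
    rw [Set.image_add_right]
    ext b
    have hb : z b = z (b + -r) + r := by simpa using hz (b + -r)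
    simp only [invSet, Set.mem_ofPred_eq, Set.mem_preimage, hz α, hb]
    constructor <;> rintro ⟨h1, h2⟩ <;> exact ⟨by linarith, by linarith⟩
  simp only [this, Set.ncard_image_of_injective _ (add_left_injective _)]

/-- Composing with an involution `s` that moves no point by more than one changes the inversions
at `α` only by the possible inversion `(α, s α)`. -/
theorem ncard_invSet_comp_add_ite {s : ℤ → ℤ} (hs : Function.Involutive s)
    (hd : ∀ k, |s k - k| ≤ 1) (x : ℤ → ℤ) (α : ℤ) (hfin : (invSet x (s α)).Finite) :
    (invSet (x ∘ s) α).ncard + (if s α < α ∧ x α < x (s α) then 1 else 0)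
      = (invSet x (s α)).ncard + (if α < s α ∧ x α < x (s α) then 1 else 0) := by
  set A := {c | α < s c ∧ x c < x (s α)}
  have himage : invSet (x ∘ s) α = s '' A := by
    ext b
    simp only [invSet, Function.comp_apply, Set.mem_image, Set.mem_ofPred_eq, A]
    exact ⟨fun hb => ⟨s b, by rwa [hs b], hs b⟩, fun ⟨c, hc, hcb⟩ => hcb ▸ by rwa [hs c]⟩
  have hdiff : A \ {α} = invSet x (s α) \ {α} := by
    ext c
    simp only [Set.mem_sdiff, Set.mem_singleton_iff, Set.mem_ofPred_eq, invSet, A]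
    exact ⟨fun ⟨⟨h1, h2⟩, h3⟩ => ⟨⟨(Int.lt_apply_iff_apply_lt hs hd h3).1 h1, h2⟩, h3⟩,
      fun ⟨⟨h1, h2⟩, h3⟩ => ⟨⟨(Int.lt_apply_iff_apply_lt hs hd h3).2 h1, h2⟩, h3⟩⟩
  have hA : A.Finite := (hfin.sdiff.insert α).subset fun c hc => by
    by_cases hcα : c = α
    · exact Or.inl hcα
    · right
      rw [← hdiff]
      exact ⟨hc, hcα⟩
  rw [himage, Set.ncard_image_of_injective _ hs.injective]
  convert Set.ncard_add_ite_eq_of_sdiff_singleton_eq hA hfin hdiff using 3 <;> rfl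

theorem invCount_mul_simpleRefl (hr : 2 ≤ r) (hz : z ∈ AffSym r) (m : ℤ) :
    invCount r (z * simpleRefl r m) + (if z (m + 1) < z m then 1 else 0)
      = invCount r z + (if z m < z (m + 1) then 1 else 0) := by
  have hzs : z * simpleRefl r m ∈ AffSym r := mul_mem hz (tPerm_mem_AffSym _ _)
  have hfin := invSet_finite (by omega) hz
  have step := ncard_invSet_comp_add_ite (s := simpleRefl r m) (tPerm_tPerm m (m + 1))
    (abs_simpleRefl_apply_sub_le m) z
  have h₀ := step m (hfin _)
  have h₁ := step (m + 1) (hfin _)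
  rw [simpleRefl_apply_self hr] at h₀
  rw [simpleRefl_apply_add_one hr] at h₁
  have hrest : ∑ k ∈ Finset.Ico 2 r, (invSet (z ∘ simpleRefl r m) (m + k)).ncard
      = ∑ k ∈ Finset.Ico 2 r, (invSet z (m + k)).ncard := by
    refine Finset.sum_congr rfl fun k hk => ?_
    obtain ⟨hk2, hkr⟩ := Finset.mem_Ico.mp hk
    simpa [simpleRefl_apply_add k hk2 hkr] using step (m + k) (hfin _)
  unfold invCount
  rw [(periodic_ncard_invSet hzs).sum_range_eq_add_add hr m,
    (periodic_ncard_invSet hz).sum_range_eq_add_add hr m, Equiv.Perm.coe_mul, hrest]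
  simp only [lt_add_one, (lt_add_one m).not_gt, true_and, false_and, if_false] at h₀ h₁
  omega

theorem invCount_mul_simpleRefl_of_lt (hr : 2 ≤ r) (hz : z ∈ AffSym r) {m : ℤ}
    (h : z (m + 1) < z m) : invCount r (z * simpleRefl r m) + 1 = invCount r z := by
  simpa [h, h.not_gt] using invCount_mul_simpleRefl hr hz m


theorem invCount_mul_simpleRefl_le (hr : 2 ≤ r) (hz : z ∈ AffSym r) (m : ℤ) :
    invCount r (z * simpleRefl r m) ≤ invCount r z + 1 := by
  have := invCount_mul_simpleRefl hr hz m
  split_ifs at this <;> omega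

end Inversions

section Words

variable {r : ℕ} {z g : Equiv.Perm ℤ}

theorem exists_word (hz : z ∈ WGrp r) :
    ∃ l : List (Equiv.Perm ℤ), (∀ g ∈ l, g ∈ sGen r) ∧ l.prod = z := by
  induction hz using Subgroup.closure_induction_right with
  | one => exact ⟨[], by simp, rfl⟩
  | mul_right x hx g hg ih =>
    obtain ⟨l, hl, rfl⟩ := ih
    exact ⟨l ++ [g], by simpa [or_imp, forall_and] using ⟨hl, hg⟩, by simp⟩
  | mul_inv_cancel x hx g hg ih =>
    obtain ⟨l, hl, rfl⟩ := ih
    exact ⟨l ++ [g], by simpa [or_imp, forall_and] using ⟨hl, hg⟩,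
      by simp [inv_eq_self_of_mem_sGen hg]⟩

theorem lenW_le_length {l : List (Equiv.Perm ℤ)} (hl : ∀ g ∈ l, g ∈ sGen r) :
    lenW r l.prod ≤ l.length :=
  Nat.sInf_le ⟨l, rfl, hl, rfl⟩

theorem exists_word_length_eq_lenW (hz : z ∈ WGrp r) :
    ∃ l : List (Equiv.Perm ℤ), (∀ g ∈ l, g ∈ sGen r) ∧ l.prod = z ∧ l.length = lenW r z := by
  obtain ⟨l₀, hl₀, hp₀⟩ := exists_word hz
  have hne : {n | ∃ l : List (Equiv.Perm ℤ), l.length = n ∧ (∀ s ∈ l, s ∈ sGen r) ∧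
      l.prod = z}.Nonempty := ⟨l₀.length, l₀, rfl, hl₀, hp₀⟩
  obtain ⟨l, hlen, hl, hp⟩ := Nat.sInf_mem hne
  exact ⟨l, hl, hp, hlen⟩

theorem mem_WGrp_of_lenW_pos (h : 0 < lenW r z) : z ∈ WGrp r := by
  by_contra hz
  refine h.ne' (Nat.sInf_eq_zero.2 (Or.inr (Set.eq_empty_of_forall_notMem ?_)))
  rintro _ ⟨l, -, hl, rfl⟩
  exact hz (list_prod_mem fun g hg => Subgroup.subset_closure (hl g hg))

theorem lenW_mul_le (hz : z ∈ WGrp r) (hg : g ∈ sGen r) : lenW r (z * g) ≤ lenW r z + 1 := by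
  obtain ⟨l, hl, rfl, hlen⟩ := exists_word_length_eq_lenW hz
  have := lenW_le_length (l := l ++ [g]) (by simpa [or_imp, forall_and] using ⟨hl, hg⟩)
  simpa [hlen] using this

theorem lenW_inv (z : Equiv.Perm ℤ) : lenW r z⁻¹ = lenW r z := by
  have reverse : ∀ {x : Equiv.Perm ℤ} {n : ℕ},
      (∃ l : List (Equiv.Perm ℤ), l.length = n ∧ (∀ g ∈ l, g ∈ sGen r) ∧ l.prod = x) →
      ∃ l : List (Equiv.Perm ℤ), l.length = n ∧ (∀ g ∈ l, g ∈ sGen r) ∧ l.prod = x⁻¹ := by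
    rintro x n ⟨l, rfl, hl, rfl⟩
    have hinv : l.map (·⁻¹) = l := by
      conv_rhs => rw [← List.map_id l]
      exact List.map_congr_left fun g hg => inv_eq_self_of_mem_sGen (hl g hg)
    exact ⟨l.reverse, l.length_reverse, fun g hg => hl g (List.mem_reverse.1 hg),
      by rw [List.prod_inv_reverse, hinv]⟩
  unfold lenW
  congr 1
  ext n
  exact ⟨fun h => inv_inv z ▸ reverse h, reverse⟩

theorem invCount_le_lenW (hr : 2 ≤ r) (hz : z ∈ WGrp r) : invCount r z ≤ lenW r z := by
  obtain ⟨l, hl, rfl, hlen⟩ := exists_word_length_eq_lenW hz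
  rw [← hlen]
  clear hz hlen
  induction l using List.reverseRecOn with
  | nil =>
    refine (Finset.sum_eq_zero fun k _ => ?_).le
    convert Set.ncard_empty ℤ
    exact Set.eq_empty_of_forall_notMem fun b hb => lt_asymm hb.1 (by simpa using hb.2)
  | append_singleton l g ih =>
    simp only [List.mem_append, List.mem_singleton, or_imp, forall_and, forall_eq] at hl
    obtain ⟨m, -, -, rfl⟩ := hl.2
    have hmem : l.prod ∈ AffSym r :=
      WGrp_le_AffSym (list_prod_mem fun g hg => Subgroup.subset_closure (hl.1 g hg))
    simp only [List.prod_append, List.prod_singleton, List.length_append, List.length_singleton]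
    linarith [invCount_mul_simpleRefl_le hr hmem m, ih hl.1]

theorem lenW_le_invCount (hr : 2 ≤ r) (hz : z ∈ WGrp r) : lenW r z ≤ invCount r z := by
  obtain ⟨n, hn⟩ : ∃ n, invCount r z = n := ⟨_, rfl⟩
  induction n using Nat.strong_induction_on generalizing z with
  | _ n ih =>
  by_cases hdesc : ∃ m, z (m + 1) < z m
  · obtain ⟨m, hm⟩ := hdesc
    have hs : simpleRefl r m ∈ sGen r := simpleRefl_mem_sGen (by omega) m
    have hzs : z * simpleRefl r m ∈ WGrp r := mul_mem hz (Subgroup.subset_closure hs)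
    have hcount := invCount_mul_simpleRefl_of_lt hr (WGrp_le_AffSym hz) hm
    have := ih (invCount r (z * simpleRefl r m)) (by omega) hzs rfl
    have := lenW_mul_le hzs hs
    rw [mul_assoc, tPerm_mul_self, mul_one] at this
    omega
  · simp only [not_exists, not_lt] at hdesc
    have hmono : StrictMono z := strictMono_int_of_lt_succ fun k =>
      (hdesc k).lt_of_ne (z.injective.ne (by omega))
    rw [eq_one_of_strictMono (by omega) hz hmono] at hn ⊢
    exact (lenW_le_length (l := []) (by simp)).trans (Nat.zero_le _)

theorem lenW_eq_invCount (hr : 2 ≤ r) (hz : z ∈ WGrp r) : lenW r z = invCount r z :=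
  (lenW_le_invCount hr hz).antisymm (invCount_le_lenW hr hz)

end Words

section Reflections

variable {r : ℕ} {i j : ℤ}

theorem simpleRefl_mul_tPerm_mul_simpleRefl_of_dvd (hr : 2 ≤ r) (h : (r : ℤ) ∣ j - 1 - i) :
    simpleRefl r i * tPerm r (i + 1) (j - 1) * simpleRefl r i = tPerm r i j := by
  have := AffSym.mul_tPerm_mul_inv (tPerm_mem_AffSym (r := r) i (i + 1)) (i + 1) (j - 1)
  rw [tPerm_inv] at this
  rw [this, simpleRefl_apply_add_one hr, simpleRefl_apply_of_dvd hr h, sub_add_cancel]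

theorem simpleRefl_mul_tPerm_mul_simpleRefl_of_not_dvd (hr : 2 ≤ r) (h : ¬ (r : ℤ) ∣ j - 1 - i)
    (hij : ¬ (r : ℤ) ∣ j - i) :
    simpleRefl r (j - 1) * tPerm r i (j - 1) * simpleRefl r (j - 1) = tPerm r i j := by
  have := AffSym.mul_tPerm_mul_inv (tPerm_mem_AffSym (r := r) (j - 1) (j - 1 + 1)) i (j - 1)
  rw [tPerm_inv] at this
  rw [this, simpleRefl_apply_self hr, tPerm_apply_of_not_dvd
    (not_dvd_add_one_sub hr _) (fun h' => h (by simpa using h'.neg_right))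
    (fun h' => hij (by simpa using h'.neg_right)), sub_add_cancel]

/-- The two steps are `(i, j) = s_i (i + 1, j - 1) s_i` and
`(i, j) = s_{j-1} (i, j - 1) s_{j-1}`. -/
theorem tPerm_induction (hr : 2 ≤ r) {P : ℤ → ℤ → Prop} (simple : ∀ m, P m (m + 1))
    (of_dvd : ∀ i j, i + 1 < j → (r : ℤ) ∣ j - 1 - i → P (i + 1) (j - 1) → P i j)
    (of_not_dvd : ∀ i j, i + 1 < j → ¬ (r : ℤ) ∣ j - 1 - i → ¬ (r : ℤ) ∣ j - i →
      P i (j - 1) → P i j)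
    (hij : i < j) (hnd : ¬ (r : ℤ) ∣ j - i) : P i j := by
  obtain ⟨n, hn⟩ : ∃ n : ℕ, j - i = n := ⟨(j - i).toNat, by omega⟩
  induction n using Nat.strong_induction_on generalizing i j with
  | _ n ih =>
  rcases (show j = i + 1 ∨ i + 1 < j by omega) with rfl | hj
  · exact simple i
  by_cases hd : (r : ℤ) ∣ j - 1 - i
  · have hr' : (r : ℤ) ≤ j - 1 - i := Int.le_of_dvd (by omega) hd
    have hnd' : ¬ (r : ℤ) ∣ j - 1 - (i + 1) := fun h' =>
      absurd (Int.le_of_dvd one_pos (by simpa using hd.sub h')) (by omega)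
    exact of_dvd i j hj hd (ih (n - 2) (by omega) (by omega) hnd' (by omega))
  · exact of_not_dvd i j hj hd hnd (ih (n - 1) (by omega) (by omega) hd (by omega))

theorem tPerm_mem_WGrp (hr : 2 ≤ r) (hij : i < j) (hnd : ¬ (r : ℤ) ∣ j - i) :
    tPerm r i j ∈ WGrp r := by
  have hs : ∀ m, simpleRefl r m ∈ WGrp r := fun m =>
    Subgroup.subset_closure (simpleRefl_mem_sGen (by omega) m)
  refine tPerm_induction hr (P := fun i j => tPerm r i j ∈ WGrp r) hs ?_ ?_ hij hnd
  · intro i j _ hd ih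
    rw [← simpleRefl_mul_tPerm_mul_simpleRefl_of_dvd hr hd]
    exact mul_mem (mul_mem (hs i) ih) (hs i)
  · intro i j _ hd hnd ih
    rw [← simpleRefl_mul_tPerm_mul_simpleRefl_of_not_dvd hr hd hnd]
    exact mul_mem (mul_mem (hs _) ih) (hs _)

theorem invCount_mul_simpleRefl_mul_mul_simpleRefl_lt (hr : 2 ≤ r) {z t : Equiv.Perm ℤ}
    (hz : z ∈ AffSym r) (ht : t ∈ AffSym r) (m : ℤ)
    (hlt : invCount r (z * simpleRefl r m * t) < invCount r (z * simpleRefl r m))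
    (hdesc : z (m + 1) < z m ∨ (z * simpleRefl r m * t) (m + 1) < (z * simpleRefl r m * t) m) :
    invCount r (z * simpleRefl r m * t * simpleRefl r m) < invCount r z := by
  have hzs : z * simpleRefl r m ∈ AffSym r := mul_mem hz (tPerm_mem_AffSym _ _)
  rcases hdesc with h | h
  · have := invCount_mul_simpleRefl_of_lt hr hz h
    have := invCount_mul_simpleRefl_le hr (mul_mem hzs ht) m
    omega
  · have := invCount_mul_simpleRefl_of_lt hr (mul_mem hzs ht) h
    have := invCount_mul_simpleRefl_le hr hz m
    omega

theorem invCount_mul_tPerm_lt (hr : 2 ≤ r) (hij : i < j) (hnd : ¬ (r : ℤ) ∣ j - i)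
    {z : Equiv.Perm ℤ} (hz : z ∈ AffSym r) (hzij : z j < z i) :
    invCount r (z * tPerm r i j) < invCount r z := by
  refine tPerm_induction hr (P := fun i j => ∀ z : Equiv.Perm ℤ, z ∈ AffSym r → z j < z i →
    invCount r (z * tPerm r i j) < invCount r z) ?_ ?_ ?_ hij hnd z hz hzij
  · exact fun m z hz h => (Nat.lt_succ_self _).trans_eq (invCount_mul_simpleRefl_of_lt hr hz h)
  · intro i j hj hd ih z hz hzij
    have hdj : (r : ℤ) ∣ j - (i + 1) := by rwa [show j - (i + 1) = j - 1 - i by ring]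
    have hdesc : z (i + 1) < z i := by
      linarith [AffSym.apply_sub_apply_of_dvd hz hdj]
    rw [← simpleRefl_mul_tPerm_mul_simpleRefl_of_dvd hr hd, ← mul_assoc, ← mul_assoc]
    refine invCount_mul_simpleRefl_mul_mul_simpleRefl_lt hr hz (tPerm_mem_AffSym _ _) i
      (ih _ (mul_mem hz (tPerm_mem_AffSym _ _)) ?_) (Or.inl hdesc)
    simpa [simpleRefl_apply_add_one hr, simpleRefl_apply_of_dvd hr hd] using hzij
  · intro i j hj hd hnd ih z hz hzij
    have hsj : simpleRefl r (j - 1) j = j - 1 := by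
      simpa using simpleRefl_apply_add_one hr (j - 1)
    have hsj₁ : simpleRefl r (j - 1) (j - 1) = j := by
      simpa using simpleRefl_apply_self hr (j - 1)
    have hsi : simpleRefl r (j - 1) i = i := tPerm_apply_of_not_dvd (not_dvd_add_one_sub hr _)
      (fun h' => hd (by simpa using h'.neg_right)) (fun h' => hnd (by simpa using h'.neg_right))
    have htj₁ : tPerm r i (j - 1) (j - 1) = i := by
      rw [tPerm_apply_of_dvd_right hd (by simp)]
      ring
    have htj : tPerm r i (j - 1) j = j :=
      tPerm_apply_of_not_dvd hd hnd (by simpa using not_dvd_add_one_sub hr (j - 1))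
    rw [← simpleRefl_mul_tPerm_mul_simpleRefl_of_not_dvd hr hd hnd, ← mul_assoc, ← mul_assoc]
    refine invCount_mul_simpleRefl_mul_mul_simpleRefl_lt hr hz (tPerm_mem_AffSym _ _) (j - 1)
      (ih _ (mul_mem hz (tPerm_mem_AffSym _ _)) (by simpa [hsi, hsj₁] using hzij)) ?_
    rw [sub_add_cancel]
    rcases lt_or_gt_of_ne (z.injective.ne (show j - 1 ≠ j by omega)) with h | h
    · exact Or.inr (by simpa [htj, hsj, htj₁, hsi] using h.trans hzij)
    · exact Or.inl h

end Reflections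

theorem Set.encard_le_encard_comp_of_involutive {α β : Type*} [LinearOrder α] [LinearOrder β]
    {x : α → β} {σ : α → α} (hσ : Function.Involutive σ)
    (hx : ∀ u, u < σ u → x u < x (σ u)) (i : α) (t : β) :
    {s | s ≤ i ∧ t < x s}.encard ≤ {s | s ≤ i ∧ t < x (σ s)}.encard := by
  classical
  -- keep `u` if it stays in the target, otherwise send it to `σ u ≤ u`
  refine Set.encard_le_encard_of_injOn (f := fun u => if t < x (σ u) then u else σ u) ?_ ?_
  · rintro u ⟨hui, htu⟩
    dsimp only
    split_ifs with h
    · exact ⟨hui, h⟩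
    · have hσu : σ u ≤ u := not_lt.mp fun hlt => h (htu.trans (hx u hlt))
      exact ⟨hσu.trans hui, by rwa [hσ u]⟩
  · rintro u₁ ⟨-, h₁⟩ u₂ ⟨-, h₂⟩ heq
    dsimp only at heq
    split_ifs at heq with k₁ k₂ k₂
    · exact heq
    · exact absurd (heq ▸ h₁) k₂
    · exact absurd (heq ▸ h₂) k₁
    · exact hσ.injective heq

/-- Counting form of: for every `i`, the nondecreasing rearrangement of `(x s)_{s ≤ i}` is
entrywise `≤` that of `(y s)_{s ≤ i}`, and that of `(x s)_{s ≥ i}` is entrywise `≥` that of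
`(y s)_{s ≥ i}`. -/
def RearrangementLE (x y : ℤ → ℤ) : Prop :=
  (∀ i t : ℤ, {s | s ≤ i ∧ t < x s}.encard ≤ {s | s ≤ i ∧ t < y s}.encard) ∧
    ∀ i t : ℤ, {s | i ≤ s ∧ x s < t}.encard ≤ {s | i ≤ s ∧ y s < t}.encard

namespace RearrangementLE

variable {x y z : ℤ → ℤ}

theorem refl (x : ℤ → ℤ) : RearrangementLE x x :=
  ⟨fun _ _ => le_rfl, fun _ _ => le_rfl⟩

theorem trans (hxy : RearrangementLE x y) (hyz : RearrangementLE y z) : RearrangementLE x z :=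
  ⟨fun i t => (hxy.1 i t).trans (hyz.1 i t), fun i t => (hxy.2 i t).trans (hyz.2 i t)⟩

theorem of_sub_const (c : ℤ) (h : RearrangementLE (fun s => x s - c) (fun s => y s - c)) :
    RearrangementLE x y :=
  ⟨fun i t => by simpa using h.1 i (t - c), fun i t => by simpa using h.2 i (t - c)⟩

theorem comp_of_involutive {σ : ℤ → ℤ} (hσ : Function.Involutive σ)
    (hx : ∀ u, u < σ u → x u < x (σ u)) : RearrangementLE x (x ∘ σ) :=
  ⟨Set.encard_le_encard_comp_of_involutive hσ hx,
    Set.encard_le_encard_comp_of_involutive (α := ℤᵒᵈ) (β := ℤᵒᵈ) (x := x) hσ fun u hu => by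
      have := hx (σ u) (by rwa [hσ u])
      rwa [hσ u] at this⟩

theorem ncard_le {r : ℕ} {w : Equiv.Perm ℤ} (h : RearrangementLE x w) (hr : 0 < r)
    (hw : w ∈ AffSym r) :
    (∀ i t : ℤ, {s | s ≤ i ∧ t < x s}.ncard ≤ {s | s ≤ i ∧ t < w s}.ncard) ∧
      ∀ i t : ℤ, {s | i ≤ s ∧ x s < t}.ncard ≤ {s | i ≤ s ∧ w s < t}.ncard :=
  ⟨fun i t => ENat.toNat_le_toNat (h.1 i t)
      (AffSym.finite_setOf_le_lt hr hw i t).encard_lt_top.ne,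
    fun i t => ENat.toNat_le_toNat (h.2 i t)
      (AffSym.finite_setOf_ge_lt hr hw i t).encard_lt_top.ne⟩

end RearrangementLE

section Bruhat

variable {r : ℕ} {i j : ℤ} {x w : Equiv.Perm ℤ}

theorem apply_inv_lt_of_lenW_lt (hr : 2 ≤ r) (hij : i < j)
    (hnd : ¬ (r : ℤ) ∣ j - i) (hlen : lenW r x < lenW r (tPerm r i j * x)) :
    x⁻¹ i < x⁻¹ j := by
  have ht := tPerm_mem_WGrp hr hij hnd
  have hx' : x⁻¹ ∈ WGrp r := by
    have := mul_mem (inv_mem ht) (mem_WGrp_of_lenW_pos (by omega : 0 < lenW r (tPerm r i j * x)))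
    rwa [inv_mul_cancel_left, ← inv_mem_iff] at this
  refine lt_of_le_of_ne (not_lt.1 fun h => ?_) (x⁻¹.injective.ne hij.ne)
  have := invCount_mul_tPerm_lt hr hij hnd (WGrp_le_AffSym hx') h
  rw [← lenW_eq_invCount hr (mul_mem hx' ht), ← lenW_eq_invCount hr hx', ← lenW_inv,
    mul_inv_rev, inv_inv, tPerm_inv, lenW_inv] at this
  omega

theorem lt_tPerm_apply_of_lt (hx : x ∈ AffSym r) (hij : i < j) (hnd : ¬ (r : ℤ) ∣ j - i)
    (hlt : x i < x j) {v : ℤ} (hv : x v < x (tPerm r i j v)) : v < tPerm r i j v := by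
  by_cases hvi : (r : ℤ) ∣ v - i
  · rw [tPerm_apply_of_dvd_left hnd hvi]
    linarith
  by_cases hvj : (r : ℤ) ∣ v - j
  · have hvi' : (r : ℤ) ∣ v - (j - i) - i := by rwa [show v - (j - i) - i = v - j by ring]
    rw [tPerm_apply_of_dvd_right hnd hvj] at hv
    linarith [AffSym.apply_sub_apply_of_dvd hx hvj, AffSym.apply_sub_apply_of_dvd hx hvi']
  · rw [tPerm_apply_of_not_dvd hnd hvi hvj] at hv
    exact absurd hv (lt_irrefl _)

theorem rearrangementLE_tPerm_mul (hx : x ∈ AffSym r) (hij : i < j)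
    (hnd : ¬ (r : ℤ) ∣ j - i) (hlt : x⁻¹ i < x⁻¹ j) :
    RearrangementLE x ⇑(tPerm r i j * x) := by
  have hσ : Function.Involutive (x⁻¹ * tPerm r i j * x) := fun u => by simp [tPerm_tPerm]
  convert RearrangementLE.comp_of_involutive hσ fun u hu => ?_ using 1
  · ext s
    simp
  · simpa using lt_tPerm_apply_of_lt (inv_mem hx) hij hnd hlt (v := x u) (by simpa using hu)

theorem rearrangementLE_of_bruhatLE (hr : 1 ≤ r) (hx : x ∈ AffSym r) (h : bruhatLE r x w) :
    RearrangementLE x w := by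
  obtain ⟨l, hl, rfl, hlen⟩ := h
  induction l with
  | nil => simpa using RearrangementLE.refl x
  | cons t l ih =>
    obtain ⟨i, j, hij, hnd, rfl⟩ := hl t List.mem_cons_self
    have hr2 : 2 ≤ r := by
      by_contra h
      exact hnd (by rw [show r = 1 by omega]; simp)
    have hlx : l.prod * x ∈ AffSym r := by
      refine mul_mem (list_prod_mem fun t ht => ?_) hx
      obtain ⟨i, j, -, -, rfl⟩ := hl t (List.mem_cons_of_mem _ ht)
      exact tPerm_mem_AffSym i j
    have h₀ : lenW r (l.prod * x) < lenW r (tPerm r i j * (l.prod * x)) := by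
      simpa [mul_assoc] using hlen 0 (by simp)
    rw [List.prod_cons, mul_assoc]
    refine (ih (fun t ht => hl t (List.mem_cons_of_mem _ ht)) fun k hk => ?_).trans
      (rearrangementLE_tPerm_mul hlx hij hnd (apply_inv_lt_of_lenW_lt hr2 hij hnd h₀))
    simpa using hlen (k + 1) (by simpa using hk)

end Bruhat

/-- if `y ≤ w` in the Bruhat order on `𝔖_{Δ,r}` then for all `i, t ∈ ℤ`,
`#{s ≤ i | y(s) > t} ≤ #{s ≤ i | w(s) > t}` (equivalently the nondecreasing
rearrangement of `(y(s))_{s≤i}` is entrywise `≤` that of `(w(s))_{s≤i}`), and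
`#{s ≥ i | y(s) < t} ≤ #{s ≥ i | w(s) < t}`. -/
theorem sorted_dominance_of_bruhat_le (r : ℕ) (hr : 1 ≤ r)
    (y w : Equiv.Perm ℤ) (hy : y ∈ AffSym r) (hw : w ∈ AffSym r)
    (hle : abruhatLE r y w) :
    (∀ i t : ℤ, {s : ℤ | s ≤ i ∧ t < y s}.ncard ≤ {s : ℤ | s ≤ i ∧ t < w s}.ncard) ∧
    (∀ i t : ℤ, {s : ℤ | i ≤ s ∧ y s < t}.ncard ≤ {s : ℤ | i ≤ s ∧ w s < t}.ncard) := by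
  obtain ⟨hshift, hle⟩ := hle
  rw [← hshift] at hle
  have hρ : rhoP ^ shiftIdx r y ∈ AffSym r :=
    zpow_mem (fun k => by simp only [rhoP, Equiv.coe_addRight]; ring) _
  have hdom := rearrangementLE_of_bruhatLE hr (mul_mem (inv_mem hρ) hy) hle
  refine (RearrangementLE.of_sub_const (shiftIdx r y) ?_).ncard_le hr hw
  simpa [rhoP, sub_eq_add_neg, Function.comp_def] using hdom
end

section
/- Let 𝔽 be a field, let V be the free 𝔽[ε,ε^{−1}]-module with basis v_1, …, v_r, and set v_{i+kr} = ε^{−k} v_i for 1 ≤ i ≤ r and k ∈ ℤ. Let λ, μ ∈ Λ_Δ(n,r), d ∈ D^Δ_{λ,μ} and A = (a_{i,j}) = J_Δ(λ,d,μ). For 1 ≤ i ≤ n and k ∈ ℤ define the 𝔽-subspaces L_{i+kn} = span_𝔽{v_a | a ∈ ℤ, a ≤ Σ_{1≤j≤i} λ_j + kr} and L'_{i+kn} = span_𝔽{v_{d(a)} | a ∈ ℤ, a ≤ Σ_{1≤j≤i} μ_j + kr} of V. Then for all i, j ∈ ℤ, dim_𝔽 (L_i ∩ L'_j)/(L_{i−1}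 ∩ L'_j + L_i ∩ L'_{j−1}) = a_{i,j}. -/
open scoped Classical

/-! The vectors `v_a`, `a ∈ ℤ`, form an `𝔽`-basis of `V`, and `L_m`, `L'_m` are spanned by the
basis vectors indexed by `{a ≤ bnd λ m}` and `d {a ≤ bnd μ m}`. For subspaces spanned by parts of
one basis, intersections and sums correspond to intersections and unions of index sets, so the
quotient has a basis indexed by `{a ≤ bnd λ i} \ {a ≤ bnd λ (i-1)}` intersected with
`d ({a ≤ bnd μ j} \ {a ≤ bnd μ (j-1)})`, i.e. by `R^λ_i ∩ d(R^μ_j)`. -/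

open Module Submodule

namespace Module.Basis

variable {R M ι : Type*} [Ring R] [AddCommGroup M] [Module R M] (B : Basis ι R M)

theorem span_image_inf_span_image (s t : Set ι) :
    span R (B '' s) ⊓ span R (B '' t) = span R (B '' (s ∩ t)) := by
  ext x
  simp only [mem_inf, B.mem_span_image, Set.subset_inter_iff]

/-- The coordinate functionals of the indices in `u \ w` identify the quotient with
`(u \ w) → R`. -/
theorem finrank_span_image_quotient [StrongRankCondition R] {u w : Set ι}
    (h : (u \ w).Finite) :
    finrank R (span R (B '' u) ⧸ (span R (B '' w)).comap (span R (B '' u)).subtype) =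
      (u \ w).ncard := by
  have := h.fintype
  set P := span R (B '' u)
  let g : P →ₗ[R] (↥(u \ w) → R) := LinearMap.pi (fun i => B.coord i) ∘ₗ P.subtype
  have hker : LinearMap.ker g = (span R (B '' w)).comap P.subtype := by
    ext ⟨x, hx⟩
    rw [mem_span_image] at hx
    simp only [LinearMap.mem_ker, mem_comap, subtype_apply, B.mem_span_image, funext_iff, g,
      LinearMap.comp_apply, LinearMap.pi_apply, coord_apply, Pi.zero_apply]
    constructor
    · intro hzero j hj
      by_contra hjw
      exact Finsupp.mem_support_iff.1 hj (hzero ⟨j, hx hj, hjw⟩)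
    · intro hw i
      by_contra hi
      exact i.2.2 (hw (Finsupp.mem_support_iff.2 hi))
  have hsurj : Function.Surjective g := by
    intro f
    refine ⟨⟨∑ i, f i • B i, sum_mem fun i _ => smul_mem _ _ (subset_span ⟨i, i.2.1, rfl⟩)⟩, ?_⟩
    ext i
    simp [g, Finsupp.single_apply, Subtype.coe_inj]
  rw [← hker, (g.quotKerEquivOfSurjective hsurj).finrank_eq, finrank_fintype_fun_eq_card,
    Set.ncard_eq_toFinset_card', Set.toFinset_card]

theorem finrank_span_image_inf_quotient [StrongRankCondition R] {s s' t t' : Set ι}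
    (h : ((s \ s') ∩ (t \ t')).Finite) :
    finrank R (↥(span R (B '' s) ⊓ span R (B '' t)) ⧸
        comap (span R (B '' s) ⊓ span R (B '' t)).subtype
          ((span R (B '' s') ⊓ span R (B '' t)) ⊔ (span R (B '' s) ⊓ span R (B '' t')))) =
      ((s \ s') ∩ (t \ t')).ncard := by
  have hsets : (s ∩ t) \ (s' ∩ t ∪ s ∩ t') = (s \ s') ∩ (t \ t') := by
    ext; simp only [Set.mem_sdiff, Set.mem_inter_iff, Set.mem_union]; tauto
  rw [span_image_inf_span_image, span_image_inf_span_image, span_image_inf_span_image,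
    ← span_union, ← Set.image_union, finrank_span_image_quotient B (hsets ▸ h), hsets]

end Module.Basis

section Bounds

variable {n r : ℕ} {lam : ℤ → ℕ}

theorem bnd_mul_add (hn : 1 ≤ n) (hlam : ∑ t ∈ Finset.Icc (1 : ℤ) n, lam t = r) (q s : ℤ)
    (hs : 0 ≤ s) (hsn : s ≤ n) :
    bnd n r lam (q * n + s) = q * r + ∑ t ∈ Finset.Icc 1 s, (lam t : ℤ) := by
  rcases hs.eq_or_lt with rfl | hs
  · have hdiv : (q * n + 0 - 1) / n = q - 1 ∧ (q * n + 0 - 1) % n = n - 1 :=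
      (Int.ediv_emod_unique (by omega)).2 ⟨by ring, by omega, by omega⟩
    have hsum : ∑ t ∈ Finset.Icc (1 : ℤ) n, (lam t : ℤ) = r := by exact_mod_cast hlam
    rw [bnd, hdiv.1, hdiv.2, sub_add_cancel, hsum, Finset.Icc_eq_empty (by omega),
      Finset.sum_empty]
    ring
  · have hdiv : (q * n + s - 1) / n = q ∧ (q * n + s - 1) % n = s - 1 :=
      (Int.ediv_emod_unique (by omega)).2 ⟨by ring, by omega, by omega⟩
    rw [bnd, hdiv.1, hdiv.2, sub_add_cancel]

theorem Rset_eq_Ioc (hn : 1 ≤ n) (hlam : ∑ t ∈ Finset.Icc (1 : ℤ) n, lam t = r) (m : ℤ) :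
    Rset n r lam m = Set.Ioc (bnd n r lam (m - 1)) (bnd n r lam m) := by
  have hpos : (0 : ℤ) < n := by omega
  rw [← Int.ediv_mul_add_emod (m - 1) n,
    bnd_mul_add hn hlam _ _ (Int.emod_nonneg _ hpos.ne') (Int.emod_lt_of_pos _ hpos).le]
  rfl

theorem Iic_bnd_sdiff_Iic_bnd (hn : 1 ≤ n) (hlam : ∑ t ∈ Finset.Icc (1 : ℤ) n, lam t = r)
    (m : ℤ) : Set.Iic (bnd n r lam m) \ Set.Iic (bnd n r lam (m - 1)) = Rset n r lam m := by
  ext a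
  simp only [Set.mem_sdiff, Set.mem_Iic, not_le, Rset_eq_Ioc hn hlam, Set.mem_Ioc]
  exact and_comm

end Bounds

noncomputable def vbBasis (F : Type*) [Field F] (r : ℕ) [NeZero r] :
    Basis ℤ F (Fin r → LaurentPolynomial F) :=
  ((Pi.basis fun _ : Fin r => AddMonoidAlgebra.basis ℤ F).reindex
      (Equiv.sigmaEquivProd (Fin r) ℤ)).reindex
    ((Equiv.subRight 1).trans ((Int.divModEquiv r).trans
      ((Equiv.prodComm _ _).trans (Equiv.prodCongr (Equiv.refl _) (Equiv.neg ℤ))))).symm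

theorem vbBasis_apply (F : Type*) [Field F] (r : ℕ) [NeZero r] (a : ℤ) :
    vbBasis F r a = vb F r a := by
  rw [vb, dif_pos (NeZero.pos r)]
  simp only [vbBasis, Basis.reindex_apply, Equiv.symm_symm, Pi.basis_apply]
  congr 1
  ext
  exact Nat.mod_eq_of_lt (Int.natMod_lt (NeZero.ne r))

section Filtration

variable (F : Type*) [Field F] (n r : ℕ) [NeZero r]

theorem Lsub_eq_span (lam : ℤ → ℕ) (m : ℤ) :
    Lsub F n r lam m = span F (vbBasis F r '' Set.Iic (bnd n r lam m)) := by
  simp only [Lsub, Set.image, Set.mem_Iic, vbBasis_apply, eq_comm]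

theorem Lsub'_eq_span (mu : ℤ → ℕ) (d : Equiv.Perm ℤ) (m : ℤ) :
    Lsub' F n r mu d m = span F (vbBasis F r '' (d '' Set.Iic (bnd n r mu m))) := by
  rw [Set.image_image]
  simp only [Lsub', Set.image, Set.mem_Iic, vbBasis_apply, eq_comm]

end Filtration

theorem dim_filtration_quotient_eq_JMat_general (F : Type*) [Field F] (n r : ℕ)
    (hn : 1 ≤ n) (hr : 1 ≤ r) (lam mu : ℤ → ℕ)
    (hlam : lam ∈ LambdaSet n r) (hmu : mu ∈ LambdaSet n r)
    (d : Equiv.Perm ℤ) :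
    ∀ i j : ℤ,
      Module.finrank F
        ((↥(Lsub F n r lam i ⊓ Lsub' F n r mu d j)) ⧸
          (Submodule.comap (Lsub F n r lam i ⊓ Lsub' F n r mu d j).subtype
            ((Lsub F n r lam (i - 1) ⊓ Lsub' F n r mu d j) ⊔
             (Lsub F n r lam i ⊓ Lsub' F n r mu d (j - 1)))))
        = JMat n r lam mu d i j := by
  intro i j
  have : NeZero r := ⟨by omega⟩
  have hcell : (Set.Iic (bnd n r lam i) \ Set.Iic (bnd n r lam (i - 1))) ∩
      (d '' Set.Iic (bnd n r mu j) \ d '' Set.Iic (bnd n r mu (j - 1))) =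
        Rset n r lam i ∩ d '' Rset n r mu j := by
    rw [← Set.image_sdiff d.injective, Iic_bnd_sdiff_Iic_bnd hn hlam.2,
      Iic_bnd_sdiff_Iic_bnd hn hmu.2]
  have hfin : (Rset n r lam i ∩ d '' Rset n r mu j).Finite :=
    (Rset_eq_Ioc hn hlam.2 i ▸ Set.finite_Ioc _ _).inter_of_left _
  rw [Lsub_eq_span, Lsub_eq_span, Lsub'_eq_span, Lsub'_eq_span,
    Basis.finrank_span_image_inf_quotient _ (hcell ▸ hfin), hcell]
  rfl

/-- for `λ, μ ∈ Λ_Δ(n,r)`, `d ∈ D^Δ_{λ,μ}` and `A = J_Δ(λ,d,μ)`,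
with `L_m = span_𝔽{v_a | a ≤ Σ_{1≤j≤i} λ_j + kr}` and
`L'_m = span_𝔽{v_{d(a)} | a ≤ Σ_{1≤j≤i} μ_j + kr}` (for `m = i + kn`, `1 ≤ i ≤ n`),
one has `dim_𝔽 (L_i ∩ L'_j)/(L_{i-1} ∩ L'_j + L_i ∩ L'_{j-1}) = a_{i,j}` for all `i, j`. -/
theorem dim_filtration_quotient_eq_JMat (F : Type*) [Field F] (n r : ℕ)
    (hn : 1 ≤ n) (hr : 1 ≤ r) (lam mu : ℤ → ℕ)
    (hlam : lam ∈ LambdaSet n r) (hmu : mu ∈ LambdaSet n r)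
    (d : Equiv.Perm ℤ) (hd : d ∈ DRep2 n r lam mu) :
    ∀ i j : ℤ,
      Module.finrank F
        ((↥(Lsub F n r lam i ⊓ Lsub' F n r mu d j)) ⧸
          (Submodule.comap (Lsub F n r lam i ⊓ Lsub' F n r mu d j).subtype
            ((Lsub F n r lam (i - 1) ⊓ Lsub' F n r mu d j) ⊔
             (Lsub F n r lam i ⊓ Lsub' F n r mu d (j - 1)))))
        = JMat n r lam mu d i j :=
  dim_filtration_quotient_eq_JMat_general F n r hn hr lam mu hlam hmu d
end

section
/- Assume N > n ≥ 1. For every A ∈ Θ_Δ(n,r), the matrix Ã ∈ Θ_Δ(N) satisfies σ(Ã) = r and Ã is aperiodic; that is, Ã ∈ Θ_Δ(N,r) and for every integer l ≠ 0 there exists 1 ≤ i ≤ N with ã_{i,i+l} = 0. -/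
open scoped Classical

/-!
Let `e : ℤ → ℤ` send `i + mn` to `i + mN` (`1 ≤ i ≤ n`, `m ∈ ℤ`). By the `n`-periodicity of `A`,
`ã_{e i, e j} = a_{i,j}`, and every other entry of `Ã` vanishes: `Ã` is `A` extended by zero along
the injection `e`. Finiteness of rows and columns transfers along `e`; the rows `1, …, n` of `Ã`
are those of `A` with their columns relabelled by `e`, so `σ(Ã) = σ(A)`; and `N ∉ range e`, so
the `N`-th row of `Ã` is zero, which is aperiodicity.
-/

open Function Set

theorem apply_add_mul_of_apply_add {M : Type*} {A : ℤ → ℤ → M} {p : ℤ}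
    (hA : ∀ i j, A (i + p) (j + p) = A i j) (c i j : ℤ) :
    A (i + c * p) (j + c * p) = A i j := by
  have hper : Periodic (fun t => A (i + t) (j + t)) p := fun t => by
    simpa only [add_assoc] using hA (i + t) (j + t)
  simpa using hper.int_mul c 0

theorem finsum_eq_finsum_comp_of_support_subset_range {α β M : Type*} [AddCommMonoid M]
    {f : α → M} {e : β → α} (he : Injective e) (h : support f ⊆ range e) :
    ∑ᶠ a, f a = ∑ᶠ b, f (e b) := by
  rw [← finsum_mem_range he, finsum_mem_def, indicator_eq_self.mpr h]

theorem finite_setOf_ne_zero_of_extend {α β M : Type*} [Zero M] {e : β → α}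
    {A : β → β → M} {B : α → α → M} (hB : ∀ i j, B (e i) (e j) = A i j)
    (hsupp : ∀ k l, B k l ≠ 0 → k ∈ range e ∧ l ∈ range e)
    (hA : ∀ i, {j | A i j ≠ 0}.Finite) (k : α) : {l | B k l ≠ 0}.Finite := by
  by_cases hk : k ∈ range e
  · obtain ⟨i, rfl⟩ := hk
    refine ((hA i).image e).subset fun l hl => ?_
    obtain ⟨j, rfl⟩ := (hsupp _ _ hl).2
    exact ⟨j, show A i j ≠ 0 from hB i j ▸ hl, rfl⟩
  · exact finite_empty.subset fun l hl => hk (hsupp _ _ hl).1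

def embedIdx (n N : ℕ) (x : ℤ) : ℤ := (x - 1) / n * N + ((x - 1) % n + 1)

section

variable {n N : ℕ}

theorem embedIdx_sub_one_ediv_emod (hn : 0 < n) (hnN : n ≤ N) (x : ℤ) :
    (embedIdx n N x - 1) / N = (x - 1) / n ∧ (embedIdx n N x - 1) % N = (x - 1) % n := by
  have h0 := Int.emod_nonneg (x - 1) (show (n : ℤ) ≠ 0 by omega)
  have h1 := Int.emod_lt_of_pos (x - 1) (show (0 : ℤ) < n by omega)
  rw [Int.ediv_emod_unique (by omega)]
  exact ⟨by unfold embedIdx; ring, h0, by omega⟩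

theorem embedIdx_injective (hn : 0 < n) (hnN : n ≤ N) : Injective (embedIdx n N) := by
  intro x y h
  obtain ⟨hqx, hrx⟩ := embedIdx_sub_one_ediv_emod hn hnN x
  obtain ⟨hqy, hry⟩ := embedIdx_sub_one_ediv_emod hn hnN y
  have hx := Int.emod_add_mul_ediv (x - 1) n
  rw [← hqx, ← hrx, h, hqy, hry, Int.emod_add_mul_ediv] at hx
  omega

theorem embedIdx_eq_self_of_le {x : ℤ} (h1 : 1 ≤ x) (hx : x ≤ n) : embedIdx n N x = x := by
  rw [embedIdx, Int.ediv_eq_zero_of_lt (by omega) (by omega),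
    Int.emod_eq_of_lt (by omega) (by omega)]
  ring

theorem mem_range_embedIdx_iff (hn : 0 < n) (hnN : n ≤ N) (k : ℤ) :
    k ∈ range (embedIdx n N) ↔ (k - 1) % N < n := by
  constructor
  · rintro ⟨x, rfl⟩
    rw [(embedIdx_sub_one_ediv_emod hn hnN x).2]
    exact Int.emod_lt_of_pos _ (by omega)
  · intro hk
    refine ⟨(k - 1) / N * n + (k - 1) % N + 1, ?_⟩
    have hqr : ((k - 1) / N * n + (k - 1) % N + 1 - 1) / n = (k - 1) / N ∧
        ((k - 1) / N * n + (k - 1) % N + 1 - 1) % n = (k - 1) % N := by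
      rw [Int.ediv_emod_unique (by omega)]
      exact ⟨by ring, Int.emod_nonneg _ (by omega), hk⟩
    rw [embedIdx, hqr.1, hqr.2]
    linarith [Int.emod_add_mul_ediv (k - 1) N]

theorem natCast_notMem_range_embedIdx (hn : 0 < n) (hnN : n < N) :
    (N : ℤ) ∉ range (embedIdx n N) := by
  rw [mem_range_embedIdx_iff hn hnN.le,
    Int.emod_eq_of_lt (a := N - 1) (b := N) (by omega) (by omega)]
  omega

theorem tildeM_add_self (A : ℤ → ℤ → ℕ) (k l : ℤ) :
    tildeM n N A (k + N) (l + N) = tildeM n N A k l := by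
  obtain rfl | hN := N.eq_zero_or_pos
  · simp
  have hq : (k + N - 1) / N = (k - 1) / N + 1 := by
    rw [show k + N - 1 = k - 1 + 1 * N by ring, Int.add_mul_ediv_right _ _ (by omega)]
  have hr : (k + N - 1) % N = (k - 1) % N := by
    rw [show k + N - 1 = k - 1 + 1 * N by ring, Int.add_mul_emod_self_right]
  have hl : l + N - ((k - 1) / N + 1) * N = l - (k - 1) / N * N := by ring
  simp only [tildeM, hq, hr, hl]

theorem mem_range_of_tildeM_ne_zero (hn : 0 < n) (hnN : n ≤ N) {A : ℤ → ℤ → ℕ} {k l : ℤ}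
    (h : tildeM n N A k l ≠ 0) : k ∈ range (embedIdx n N) ∧ l ∈ range (embedIdx n N) := by
  rw [mem_range_embedIdx_iff hn hnN, mem_range_embedIdx_iff hn hnN]
  simp only [tildeM] at h
  split_ifs at h with hc
  · rw [show l - (k - 1) / N * N - 1 = l - 1 + -((k - 1) / N) * N by ring,
      Int.add_mul_emod_self_right] at hc
    omega
  · exact absurd rfl h

theorem tildeM_embedIdx (hn : 0 < n) (hnN : n ≤ N) {A : ℤ → ℤ → ℕ}
    (hA : ∀ i j, A (i + n) (j + n) = A i j) (i j : ℤ) :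
    tildeM n N A (embedIdx n N i) (embedIdx n N j) = A i j := by
  have hri := Int.emod_lt_of_pos (i - 1) (show (0 : ℤ) < n by omega)
  have hrj := Int.emod_lt_of_pos (j - 1) (show (0 : ℤ) < n by omega)
  have hi := embedIdx_sub_one_ediv_emod hn hnN i
  have hj : (embedIdx n N j - (i - 1) / n * N - 1) / N = (j - 1) / n - (i - 1) / n ∧
      (embedIdx n N j - (i - 1) / n * N - 1) % N = (j - 1) % n := by
    rw [Int.ediv_emod_unique (by omega)]
    exact ⟨by unfold embedIdx; ring, Int.emod_nonneg _ (by omega), by omega⟩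
  simp only [tildeM, hi.1, hi.2, hj.1, hj.2]
  rw [if_pos ⟨by omega, by omega⟩, ← apply_add_mul_of_apply_add hA (-((i - 1) / n)) i j]
  congr 1 <;> linarith [Int.emod_add_mul_ediv (i - 1) n, Int.emod_add_mul_ediv (j - 1) n]

theorem sum_Icc_tildeM_embedIdx (hn : 0 < n) (hnN : n ≤ N) {A : ℤ → ℤ → ℕ}
    (hA : ∀ i j, A (i + n) (j + n) = A i j) (j : ℤ) :
    ∑ k ∈ Finset.Icc 1 (N : ℤ), tildeM n N A k (embedIdx n N j) =
      ∑ i ∈ Finset.Icc 1 (n : ℤ), A i j := by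
  symm
  refine Finset.sum_subset_zero_on_sdiff (Finset.Icc_subset_Icc_right (by omega)) ?_ ?_
  · intro k hk
    rw [Finset.mem_sdiff, Finset.mem_Icc, Finset.mem_Icc] at hk
    by_contra h
    have := (mem_range_embedIdx_iff hn hnN k).mp (mem_range_of_tildeM_ne_zero hn hnN h).1
    rw [Int.emod_eq_of_lt (by omega) (by omega)] at this
    omega
  · intro i hi
    rw [Finset.mem_Icc] at hi
    rw [← tildeM_embedIdx hn hnN hA, embedIdx_eq_self_of_le hi.1 hi.2]

theorem sigmaTot_tildeM (hn : 0 < n) (hnN : n ≤ N) {A : ℤ → ℤ → ℕ}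
    (hA : ∀ i j, A (i + n) (j + n) = A i j) : sigmaTot N (tildeM n N A) = sigmaTot n A := by
  unfold sigmaTot
  rw [finsum_eq_finsum_comp_of_support_subset_range (embedIdx_injective hn hnN)]
  · exact finsum_congr (sum_Icc_tildeM_embedIdx hn hnN hA)
  · intro l hl
    obtain ⟨k, -, hk⟩ := Finset.exists_ne_zero_of_sum_ne_zero hl
    exact (mem_range_of_tildeM_ne_zero hn hnN hk).2

end

/-- for `N > n` and `A ∈ Θ_Δ(n,r)`, the matrix `Ã` lies in `Θ_Δ(N,r)`
and is aperiodic. -/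
theorem tilde_mem_Theta_aperiodic (n N r : ℕ) (hn : 1 ≤ n) (hnN : n < N)
    (A : ℤ → ℤ → ℕ) (hA : A ∈ ThetaSet n) (hs : sigmaTot n A = r) :
    tildeM n N A ∈ ThetaSet N ∧ sigmaTot N (tildeM n N A) = r ∧
    ∀ l : ℤ, l ≠ 0 → ∃ i : ℤ, 1 ≤ i ∧ i ≤ (N : ℤ) ∧ tildeM n N A i (i + l) = 0 := by
  obtain ⟨hper, hrow, hcol⟩ := hA
  have hext := tildeM_embedIdx hn hnN.le hper
  have hsupp : ∀ k l, tildeM n N A k l ≠ 0 →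
      k ∈ range (embedIdx n N) ∧ l ∈ range (embedIdx n N) :=
    fun _ _ => mem_range_of_tildeM_ne_zero hn hnN.le
  refine ⟨⟨tildeM_add_self A, finite_setOf_ne_zero_of_extend hext hsupp hrow,
      finite_setOf_ne_zero_of_extend (A := fun i j => A j i) (B := fun k l => tildeM n N A l k)
        (fun i j => hext j i) (fun k l h => (hsupp l k h).symm) hcol⟩,
    (sigmaTot_tildeM hn hnN.le hper).trans hs, fun l _ => ⟨N, by omega, le_rfl, ?_⟩⟩
  exact not_not.mp fun h => natCast_notMem_range_embedIdx hn hnN (hsupp _ _ h).1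
end

section
/- The relation ⊑ is a partial order on Θ̃_Δ(n). In particular (antisymmetry), if A, B ∈ Θ̃_Δ(n) satisfy B ⊑ A and A ⊑ B, then A = B. -/
open scoped Classical

/-!
Reflexivity and transitivity are immediate. For antisymmetry, periodicity and finiteness of
the rows confine the support of a matrix in `Θ̃_Δ(n)` to a band `|t - s| ≤ M`, so every
`σ_{i,j}` is a finite quadrant sum and each off-diagonal entry `a_{i,j}` is recovered from four
of them by inclusion–exclusion (for `i > j` after reflecting `(s, t) ↦ (-s, -t)`). Equal `σ`'s
thus give equal off-diagonal entries, and equal row sums then give equal diagonal entries.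
-/

theorem exists_band_of_periodic {n : ℕ} (hn : 0 < n) {A : ℤ → ℤ → ℤ}
    (hper : ∀ i j, A (i + n) (j + n) = A i j) (hrow : ∀ i, {j | A i j ≠ 0}.Finite) :
    ∃ M : ℤ, ∀ s t, A s t ≠ 0 → |t - s| ≤ M := by
  -- row `s`, read relative to the diagonal entry `(s, s)`, depends only on `s mod n`
  have hprofile : Function.Periodic (fun s d => A s (s + d)) (n : ℤ) := fun s => by
    funext d
    simp only
    rw [show s + n + d = s + d + n by ring, hper]
  have hoffsets : (⋃ y ∈ Set.Ico (0 : ℤ) n, {d | A y (y + d) ≠ 0}).Finite :=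
    (Set.finite_Ico (0 : ℤ) n).biUnion fun y _ =>
      ((hrow y).image (· - y)).subset fun d hd => ⟨y + d, hd, by ring⟩
  obtain ⟨M, hM⟩ := (hoffsets.image abs).bddAbove
  refine ⟨M, fun s t hst => hM ⟨t - s, ?_, rfl⟩⟩
  obtain ⟨y, hy, hsy⟩ := hprofile.exists_mem_Ico₀ (by exact_mod_cast hn) s
  refine Set.mem_biUnion hy ?_
  show A y (y + (t - s)) ≠ 0
  rwa [← congrFun hsy (t - s), add_sub_cancel]

noncomputable def quadrantSum (A : ℤ → ℤ → ℤ) (i j : ℤ) : ℤ :=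
  ∑ᶠ (p : ℤ × ℤ) (_ : p.1 ≤ i ∧ j ≤ p.2), A p.1 p.2

section Band

variable {A : ℤ → ℤ → ℤ} {M : ℤ}

theorem hasFiniteSupport_quadrant (hband : ∀ s t, A s t ≠ 0 → |t - s| ≤ M) (i j : ℤ) :
    (fun p : ℤ × ℤ => if p.1 ≤ i ∧ j ≤ p.2 then A p.1 p.2 else 0).HasFiniteSupport := by
  refine ((Set.finite_Icc (j - M) i).prod (Set.finite_Icc j (i + M))).subset ?_
  rintro ⟨s, t⟩ hst
  simp only [Function.mem_support, ne_eq, ite_eq_right_iff, not_forall] at hst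
  obtain ⟨⟨hs, ht⟩, hne⟩ := hst
  have := abs_le.mp (hband s t hne)
  simp only [Set.mem_prod, Set.mem_Icc]
  omega

theorem quadrantSum_inclusion_exclusion (hband : ∀ s t, A s t ≠ 0 → |t - s| ≤ M) (i j : ℤ) :
    quadrantSum A i j - quadrantSum A (i - 1) j - quadrantSum A i (j + 1)
      + quadrantSum A (i - 1) (j + 1) = A i j := by
  have hfin := hasFiniteSupport_quadrant hband
  simp only [quadrantSum, finsum_eq_if]
  rw [← finsum_sub_distrib (hfin _ _) (hfin _ _),
    ← finsum_sub_distrib ((hfin _ _).fun_sub (hfin _ _)) (hfin _ _),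
    ← finsum_add_distrib (((hfin _ _).fun_sub (hfin _ _)).fun_sub (hfin _ _)) (hfin _ _),
    finsum_eq_single _ (i, j)]
  · simp
  · rintro ⟨s, t⟩ hst
    simp only [ne_eq, Prod.mk.injEq] at hst
    split_ifs <;> omega

end Band

theorem sigmaOrdZ_of_lt {A : ℤ → ℤ → ℤ} {i j : ℤ} (h : i < j) :
    sigmaOrdZ A i j = quadrantSum A i j :=
  if_pos h

theorem sigmaOrdZ_neg {A : ℤ → ℤ → ℤ} {i j : ℤ} (h : i ≠ j) :
    sigmaOrdZ (fun s t => A (-s) (-t)) i j = sigmaOrdZ A (-i) (-j) := by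
  have reindex (P Q : ℤ × ℤ → Prop) (hPQ : ∀ p, P p ↔ Q (-p)) :
      ∑ᶠ (p : ℤ × ℤ) (_ : P p), A (-p.1) (-p.2) = ∑ᶠ (p : ℤ × ℤ) (_ : Q p), A p.1 p.2 := by
    rw [← finsum_comp_equiv (Equiv.neg _)]
    exact finsum_congr fun p => by simp [hPQ]
  unfold sigmaOrdZ
  rcases h.lt_or_gt with h | h
  · rw [if_pos h, if_neg (by omega)]
    exact reindex _ _ fun p => by simp only [Prod.fst_neg, Prod.snd_neg]; omega
  · rw [if_neg (by omega), if_pos (by omega)]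
    exact reindex _ _ fun p => by simp only [Prod.fst_neg, Prod.snd_neg]; omega

section Entries

variable {A B : ℤ → ℤ → ℤ} {MA MB : ℤ}

theorem apply_eq_of_sigmaOrdZ_eq_of_lt
    (hA : ∀ s t, A s t ≠ 0 → |t - s| ≤ MA) (hB : ∀ s t, B s t ≠ 0 → |t - s| ≤ MB)
    (hσ : ∀ i j, i ≠ j → sigmaOrdZ A i j = sigmaOrdZ B i j) {i j : ℤ} (hij : i < j) :
    A i j = B i j := by
  have hq (i' j' : ℤ) (h : i' < j') : quadrantSum A i' j' = quadrantSum B i' j' := by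
    rw [← sigmaOrdZ_of_lt h, ← sigmaOrdZ_of_lt h, hσ i' j' h.ne]
  rw [← quadrantSum_inclusion_exclusion hA, ← quadrantSum_inclusion_exclusion hB,
    hq i j hij, hq (i - 1) j (by omega), hq i (j + 1) (by omega), hq (i - 1) (j + 1) (by omega)]

theorem apply_eq_of_sigmaOrdZ_eq
    (hA : ∀ s t, A s t ≠ 0 → |t - s| ≤ MA) (hB : ∀ s t, B s t ≠ 0 → |t - s| ≤ MB)
    (hσ : ∀ i j, i ≠ j → sigmaOrdZ A i j = sigmaOrdZ B i j) {i j : ℤ} (hij : i ≠ j) :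
    A i j = B i j := by
  rcases hij.lt_or_gt with h | h
  · exact apply_eq_of_sigmaOrdZ_eq_of_lt hA hB hσ h
  · have hreflect := apply_eq_of_sigmaOrdZ_eq_of_lt
      (A := fun s t => A (-s) (-t)) (B := fun s t => B (-s) (-t))
      (fun s t hst => by simpa [neg_add_eq_sub, abs_sub_comm] using hA _ _ hst)
      (fun s t hst => by simpa [neg_add_eq_sub, abs_sub_comm] using hB _ _ hst)
      (fun i' j' h' => by rw [sigmaOrdZ_neg h', sigmaOrdZ_neg h', hσ _ _ (neg_injective.ne h')])
      (neg_lt_neg h)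
    simpa using hreflect

theorem apply_self_eq_of_roMZ_eq {i : ℤ}
    (hA : {j | A i j ≠ 0}.Finite) (hB : {j | B i j ≠ 0}.Finite)
    (hoff : ∀ j, j ≠ i → A i j = B i j) (hro : roMZ A i = roMZ B i) : A i i = B i i := by
  have hdiff : roMZ A i - roMZ B i = A i i - B i i := by
    simp only [roMZ]
    rw [← finsum_sub_distrib hA hB,
      finsum_eq_single _ i fun j hj => by rw [hoff j hj, sub_self]]
  omega

end Entries

theorem sqLE_refl (A : ℤ → ℤ → ℤ) : sqLE A A :=
  ⟨fun _ _ _ => le_rfl, rfl, rfl⟩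

theorem sqLE_trans {A B C : ℤ → ℤ → ℤ} (hCB : sqLE C B) (hBA : sqLE B A) : sqLE C A :=
  ⟨fun i j hij => (hCB.1 i j hij).trans (hBA.1 i j hij), hCB.2.1.trans hBA.2.1,
    hCB.2.2.trans hBA.2.2⟩

theorem sqLE_antisymm {n : ℕ} (hn : 0 < n) {A B : ℤ → ℤ → ℤ}
    (hA : A ∈ ThetaTSet n) (hB : B ∈ ThetaTSet n) (hBA : sqLE B A) (hAB : sqLE A B) :
    A = B := by
  obtain ⟨MA, hbandA⟩ := exists_band_of_periodic hn hA.2.1 hA.2.2.1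
  obtain ⟨MB, hbandB⟩ := exists_band_of_periodic hn hB.2.1 hB.2.2.1
  have hoff (i j : ℤ) (hij : i ≠ j) : A i j = B i j :=
    apply_eq_of_sigmaOrdZ_eq hbandA hbandB
      (fun i j h => le_antisymm (hAB.1 i j h) (hBA.1 i j h)) hij
  funext i j
  rcases eq_or_ne i j with rfl | hij
  · exact apply_self_eq_of_roMZ_eq (hA.2.2.1 i) (hB.2.2.1 i) (fun j hj => hoff i j hj.symm)
      (congrFun hAB.2.1 i)
  · exact hoff i j hij

/-- the relation `⊑` is a partial order on `Θ̃_Δ(n)`; in particular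
it is reflexive, transitive, and antisymmetric. -/
theorem sqLE_partialOrder (n : ℕ) (hn : 1 ≤ n) :
    (∀ A ∈ ThetaTSet n, sqLE A A) ∧
    (∀ A B C : ℤ → ℤ → ℤ, A ∈ ThetaTSet n → B ∈ ThetaTSet n → C ∈ ThetaTSet n →
      sqLE C B → sqLE B A → sqLE C A) ∧
    (∀ A B : ℤ → ℤ → ℤ, A ∈ ThetaTSet n → B ∈ ThetaTSet n →
      sqLE B A → sqLE A B → A = B) :=
  ⟨fun A _ => sqLE_refl A, fun _ _ _ _ _ _ hCB hBA => sqLE_trans hCB hBA,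
    fun _ _ hA hB hBA hAB => sqLE_antisymm hn hA hB hBA hAB⟩
end
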